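/- arXiv:1210.6401 — 8 statements merged into one kernel-verified Lean document; each statement's English description precedes it below -/
import Mathlib

section
/- Let p be a positive integer, ω_p ∈ ℂ a primitive p-th root of unity, α : ZMod p → ℂ, and A = Σ_{i ∈ ZMod p} α(i) J_p^i. Then for every t ∈ ℝ the matrix exponential of tA has entries (exp(tA))_{j,l} = (1/p) Φ_{l-j}(t) for all j, l ∈ ZMod p, where Φ_m(t) = Σ_{k ∈ ZMod p} ω_p^{mk} exp(t λ_k) and λ_k = Σ_{i ∈ ZMod p} α(i) ω̄_p^{ki}. -/
open Matrix

noncomputable section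

/-- The primary permutation (left-shift) matrix `J_p`. -/
def Jmat (p : ℕ) : Matrix (ZMod p) (ZMod p) ℂ :=
  Matrix.of fun i j => if j = i + 1 then 1 else 0

/-!
`A` is the transposed circulant matrix of `α`. For a primitive additive character `ψ` of a
finite ring, the Fourier matrix `(ψ (-(a * b)))_{a,b}` diagonalises every such matrix, with the
eigenvalues `λ_k`, and orthogonality of characters shows that its inverse is
`(1 / #R) (ψ (a * b))_{a,b}`. Hence `exp (t A) = F exp (t Λ) F⁻¹`, whose entries are the sums
`Φ`. On `ZMod p` one takes `ψ a = ω ^ a.val`, so that `ω ^ (a.val * b.val) = ψ (a * b)` and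
`ω̄ ^ (a.val * b.val) = ψ (-(a * b))`.
-/

namespace Matrix

variable {R : Type*} [CommRing R] [Fintype R] [DecidableEq R] (ψ : AddChar R ℂ)

def fourierMatrix : Matrix R R ℂ := of fun a b => ψ (-(a * b))

def invFourierMatrix : Matrix R R ℂ := (Fintype.card R : ℂ)⁻¹ • of fun a b => ψ (a * b)

variable {ψ}

theorem fourierMatrix_mul_invFourierMatrix (hψ : ψ.IsPrimitive) :
    fourierMatrix ψ * invFourierMatrix ψ = 1 := by
  ext a b
  have hterm : ∀ k, fourierMatrix ψ a k * invFourierMatrix ψ k b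
      = (Fintype.card R : ℂ)⁻¹ * ψ (k * (b - a)) := fun k => by
    simp only [fourierMatrix, invFourierMatrix, of_apply, smul_apply, smul_eq_mul]
    rw [mul_left_comm, ← AddChar.map_add_eq_mul]
    ring_nf
  rw [mul_apply, Finset.sum_congr rfl fun k _ => hterm k, ← Finset.mul_sum,
    AddChar.sum_mulShift _ hψ, one_apply]
  rcases eq_or_ne a b with rfl | hab
  · simp
  · simp [sub_eq_zero, hab, hab.symm]

def fourierUnit (hψ : ψ.IsPrimitive) : (Matrix R R ℂ)ˣ where
  val := fourierMatrix ψ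
  inv := invFourierMatrix ψ
  val_inv := fourierMatrix_mul_invFourierMatrix hψ
  inv_val := mul_eq_one_comm.mp (fourierMatrix_mul_invFourierMatrix hψ)

theorem transpose_circulant_mul_fourierMatrix (v : R → ℂ) :
    (circulant v)ᵀ * fourierMatrix ψ =
      fourierMatrix ψ * diagonal fun k => ∑ i, v i * ψ (-(k * i)) := by
  ext a b
  rw [mul_apply, mul_diagonal, ← Equiv.sum_comp (Equiv.addLeft a), Finset.mul_sum]
  refine Finset.sum_congr rfl fun i _ => ?_
  simp only [fourierMatrix, transpose_apply, circulant_apply, of_apply, Equiv.coe_addLeft,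
    add_sub_cancel_left]
  rw [mul_left_comm, ← AddChar.map_add_eq_mul]
  ring_nf

theorem transpose_circulant_eq_conj (hψ : ψ.IsPrimitive) (v : R → ℂ) :
    (circulant v)ᵀ = (fourierUnit hψ : Matrix R R ℂ) * diagonal (fun k => ∑ i, v i * ψ (-(k * i)))
      * ((fourierUnit hψ)⁻¹ : (Matrix R R ℂ)ˣ) := by
  rw [show (fourierUnit hψ : Matrix R R ℂ) = fourierMatrix ψ from rfl,
    ← transpose_circulant_mul_fourierMatrix]
  exact (Units.mul_inv_cancel_right _ (fourierUnit hψ)).symm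

theorem exp_transpose_circulant_apply (hψ : ψ.IsPrimitive) (v : R → ℂ) (j l : R) :
    NormedSpace.exp (circulant v)ᵀ j l = (Fintype.card R : ℂ)⁻¹ *
      ∑ k, ψ ((l - j) * k) * Complex.exp (∑ i, v i * ψ (-(k * i))) := by
  rw [transpose_circulant_eq_conj hψ, exp_units_conj, exp_diagonal, mul_apply, Finset.mul_sum]
  refine Finset.sum_congr rfl fun k _ => ?_
  simp only [fourierUnit, fourierMatrix, invFourierMatrix, mul_diagonal, Units.inv_mk, of_apply,
    smul_apply, smul_eq_mul, Pi.exp_def, ← Complex.exp_eq_exp_ℂ]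
  rw [show (l - j) * k = -(j * k) + k * l by ring, AddChar.map_add_eq_mul]
  ring

end Matrix

theorem Jmat_pow_apply (p : ℕ) [NeZero p] (n : ℕ) (j m : ZMod p) :
    (Jmat p ^ n) j m = if m = j + n then 1 else 0 := by
  induction n generalizing m with
  | zero => simp [one_apply, eq_comm]
  | succ n ih =>
    rw [pow_succ, mul_apply, Finset.sum_eq_single (m - 1)]
    · rw [ih]
      simp [Jmat, sub_eq_iff_eq_add, add_assoc]
    · intro b _ hb
      have : m ≠ b + 1 := fun h => hb (eq_sub_of_add_eq h.symm)
      simp [Jmat, this]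
    · simp

theorem sum_smul_Jmat_pow (p : ℕ) [NeZero p] (α : ZMod p → ℂ) :
    ∑ i : ZMod p, α i • Jmat p ^ i.val = (circulant α)ᵀ := by
  ext a m
  simp only [Matrix.sum_apply, Matrix.smul_apply, Jmat_pow_apply, ZMod.natCast_val,
    ZMod.cast_id', id, smul_eq_mul, mul_ite, mul_one, mul_zero, transpose_apply, circulant_apply]
  rw [Finset.sum_eq_single (m - a)] <;> grind

theorem pow_val_mul_val_eq_zmodChar {C : Type*} [CommMonoid C] {p : ℕ} [NeZero p] {ζ : C}
    (hζ : ζ ^ p = 1) (a b : ZMod p) :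
    ζ ^ (a.val * b.val) = AddChar.zmodChar p hζ (a * b) := by
  rw [← AddChar.zmodChar_apply' hζ]
  push_cast [ZMod.natCast_val, ZMod.cast_id', id]
  rfl

theorem stmt3 (p : ℕ) [NeZero p] (ωp : ℂ) (hωp : IsPrimitiveRoot ωp p)
    (α : ZMod p → ℂ) (A : Matrix (ZMod p) (ZMod p) ℂ)
    (hA : A = ∑ i : ZMod p, α i • (Jmat p) ^ i.val)
    (lam : ZMod p → ℂ)
    (hlam : ∀ k, lam k = ∑ i : ZMod p, α i * (star ωp) ^ (k.val * i.val))
    (Φ : ZMod p → ℝ → ℂ)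
    (hΦ : ∀ m t, Φ m t = ∑ k : ZMod p, ωp ^ (m.val * k.val) * Complex.exp (t * lam k)) :
    ∀ (t : ℝ) (j l : ZMod p),
      NormedSpace.exp ((t : ℂ) • A) j l = (1 / (p : ℂ)) * Φ (l - j) t := by
  intro t j l
  set ψ := AddChar.zmodChar p hωp.pow_eq_one
  have hψ : ψ.IsPrimitive := AddChar.zmodChar_primitive_of_primitive_root p hωp
  have hω : ∀ a b : ZMod p, ωp ^ (a.val * b.val) = ψ (a * b) :=
    pow_val_mul_val_eq_zmodChar hωp.pow_eq_one
  have hω_star : ∀ a b : ZMod p, star ωp ^ (a.val * b.val) = ψ (-(a * b)) := fun a b => by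
    rw [AddChar.map_neg_eq_conj, ← hω, map_pow]; rfl
  have htA : (t : ℂ) • A = (circulant ((t : ℂ) • α))ᵀ := by
    rw [hA, sum_smul_Jmat_pow, circulant_smul, transpose_smul]
  rw [htA, exp_transpose_circulant_apply hψ, ZMod.card, one_div, hΦ]
  simp only [hω, hlam, hω_star, Pi.smul_apply, smul_eq_mul, mul_assoc, Finset.mul_sum]
end
end

section
/- Let p be a positive integer, c : ZMod p ≃ ZMod p a bijection (a cycle of maximal length), and J_c = Σ_{i} E_{c(i), c(i+1)} its passage matrix. Let (B_l)_{l ∈ ZMod p} be a family of p-dimensional subspaces of the p×p complex matrices, mutually orthogonal with respect to the Hilbert–Schmidt inner product ⟨A, B⟩ = tr(A*B), with B_0 equal to the span of the diagonal matrix units {E_{k,k} : k ∈ ZMod p}. Then the following are equivalent: (a) left multiplication by J_c maps B_l onto B_{l+1} for every l ∈ ZMod p; (b) B_l = span{E_{c(k), c(k+l)} : k ∈ ZMod p} for every l ∈ ZMod p. -/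
/-!
Both sides determine every block from `B 0` by the recursion `B (l + 1) = J_c B l`: since
`J_c E_{c k, j} = E_{c (k - 1), j}`, left multiplication by `J_c` carries the spanning set
`{E_{c k, c (k + l)}}` of the `l`-th block of (b) onto that of the `(l + 1)`-st, and for `l = 0`
this spanning set is the set of diagonal matrix units.
-/

open Matrix

noncomputable section

/-- The passage matrix of the maximal-length cycle determined by a bijection `c`. -/
def passageMatrix (p : ℕ) [NeZero p] (c : ZMod p ≃ ZMod p) : Matrix (ZMod p) (ZMod p) ℂ :=
  ∑ i : ZMod p, Matrix.single (c i) (c (i + 1)) (1 : ℂ)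

theorem ZMod.eq_of_eq_zero_of_forall_add_one {n : ℕ} [NeZero n] {α : Type*}
    {F G : ZMod n → α} (f : α → α) (h0 : F 0 = G 0)
    (hF : ∀ l, F (l + 1) = f (F l)) (hG : ∀ l, G (l + 1) = f (G l)) : F = G := by
  have hnat : ∀ m : ℕ, F m = G m := by
    intro m
    induction m with
    | zero => simpa using h0
    | succ m ih => rw [Nat.cast_succ, hF, hG, ih]
  funext l
  obtain ⟨m, rfl⟩ := ZMod.natCast_zmod_surjective l
  exact hnat m

section

variable {p : ℕ} [NeZero p] (c : ZMod p ≃ ZMod p)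

theorem passageMatrix_mul_single (k j : ZMod p) (a : ℂ) :
    passageMatrix p c * single (c k) j a = single (c (k - 1)) j a := by
  rw [passageMatrix, Finset.sum_mul, Finset.sum_eq_single (k - 1)]
  · rw [sub_add_cancel, single_mul_single_same, one_mul]
  · intro i _ hi
    apply single_mul_single_of_ne
    exact fun h => hi (eq_sub_of_add_eq (c.injective h))
  · simp

theorem map_mulLeft_passageMatrix_span_single (l : ZMod p) :
    Submodule.map (LinearMap.mulLeft ℂ (passageMatrix p c))
      (Submodule.span ℂ (Set.range fun k : ZMod p => single (c k) (c (k + l)) (1 : ℂ))) =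
    Submodule.span ℂ (Set.range fun k : ZMod p => single (c k) (c (k + (l + 1))) (1 : ℂ)) := by
  rw [Submodule.map_span, ← Set.range_comp]
  have hcomp : (LinearMap.mulLeft ℂ (passageMatrix p c) ∘
      fun k : ZMod p => single (c k) (c (k + l)) (1 : ℂ)) =
      (fun k : ZMod p => single (c k) (c (k + (l + 1))) (1 : ℂ)) ∘ fun k => k - 1 := by
    funext k
    simp only [Function.comp, LinearMap.mulLeft_apply, passageMatrix_mul_single]
    rw [show k - 1 + (l + 1) = k + l by ring]
  rw [hcomp]
  exact congrArg _ ((Equiv.subRight (1 : ZMod p)).surjective.range_comp _)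

end

theorem stmt6_general (p : ℕ) [NeZero p] (c : ZMod p ≃ ZMod p)
    (B : ZMod p → Submodule ℂ (Matrix (ZMod p) (ZMod p) ℂ))
    (hB0 : B 0 = Submodule.span ℂ
      (Set.range fun k : ZMod p => Matrix.single k k (1 : ℂ))) :
    (∀ l, Submodule.map (LinearMap.mulLeft ℂ (passageMatrix p c)) (B l) = B (l + 1)) ↔
    (∀ l, B l = Submodule.span ℂ
      (Set.range fun k : ZMod p => Matrix.single (c k) (c (k + l)) (1 : ℂ))) := by
  constructor
  · intro hB l
    refine congrFun (ZMod.eq_of_eq_zero_of_forall_add_one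
      (G := fun l => Submodule.span ℂ (Set.range fun k => single (c k) (c (k + l)) (1 : ℂ)))
      _ ?_ (fun l => (hB l).symm) (fun l => (map_mulLeft_passageMatrix_span_single c l).symm)) l
    simp only [hB0, add_zero]
    exact congrArg _ (c.surjective.range_comp fun k => single k k (1 : ℂ)).symm
  · intro hB l
    rw [hB l, map_mulLeft_passageMatrix_span_single, hB (l + 1)]

theorem stmt6 (p : ℕ) [NeZero p] (c : ZMod p ≃ ZMod p)
    (B : ZMod p → Submodule ℂ (Matrix (ZMod p) (ZMod p) ℂ))
    (hdim : ∀ l, Module.finrank ℂ (B l) = p)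
    (horth : ∀ l l', l ≠ l' → ∀ x ∈ B l, ∀ y ∈ B l', Matrix.trace (xᴴ * y) = 0)
    (hB0 : B 0 = Submodule.span ℂ
      (Set.range fun k : ZMod p => Matrix.single k k (1 : ℂ))) :
    (∀ l, Submodule.map (LinearMap.mulLeft ℂ (passageMatrix p c)) (B l) = B (l + 1)) ↔
    (∀ l, B l = Submodule.span ℂ
      (Set.range fun k : ZMod p => Matrix.single (c k) (c (k + l)) (1 : ℂ))) :=
  stmt6_general p c B hB0
end
end

section
/- Let p be a positive integer, c : ZMod p ≃ ZMod p a bijection (a cycle of maximal length), and J_c = Σ_i E_{c(i), c(i+1)} its passage matrix. Let Φ be a linear map on the p×p complex matrices and β : ZMod p → ℝ a family of nonnegative coefficients such that Φ(E_{c(j), c(j+l)}) = Σ_{k ∈ ZMod p} β(k) E_{c(j+k), c(j+k+l)} for all j, l ∈ ZMod p. Then Φ(x) = Σ_{k ∈ ZMod p} β(-k) · J_c^k x (J_c^k)* for every p×p complex matrix x; that is, every circulant completely positive map equals the map Φ_c associated with the cycle c. -/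
open Matrix

noncomputable section

/-!
Conjugation by `J_c ^ k` translates the matrix unit `E_{c j, c (j + l)}` to
`E_{c (j - k), c (j + l - k)}`, so `x ↦ ∑ k, β (-k) • J_c ^ k * x * (J_c ^ k)ᴴ` acts on these matrix
units exactly as `Φ` does. Both maps are linear and the units `E_{c j, c (j + l)}` are all the matrix
units, hence the two maps coincide.
-/

namespace Matrix

variable {G ι R : Type*} [AddCommGroup G] [DecidableEq ι]

theorem linearMap_ext_single_equiv [Finite ι] [Semiring R] {M : Type*} [AddCommMonoid M] [Module R M]
    (c : G ≃ ι) {f g : Matrix ι ι R →ₗ[R] M}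
    (h : ∀ j l : G, f (single (c j) (c (j + l)) 1) = g (single (c j) (c (j + l)) 1)) :
    f = g := by
  refine ext_linearMap R fun a b => LinearMap.ext_ring ?_
  obtain ⟨j, rfl⟩ := c.surjective a
  obtain ⟨l, rfl⟩ : ∃ l, c (j + l) = b := ⟨c.symm b - j, by simp⟩
  exact h j l

variable [Fintype G]

variable (R) in
/-- `∑ i, E_{c i, c (i + k)}`: the `k`-th power of the passage matrix of `c`. -/
def shiftMatrix [Semiring R] (c : G ≃ ι) (k : G) : Matrix ι ι R :=
  ∑ i : G, single (c i) (c (i + k)) 1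

theorem shiftMatrix_conjTranspose [Semiring R] [StarRing R] (c : G ≃ ι) (k : G) :
    (shiftMatrix R c k)ᴴ = shiftMatrix R c (-k) := by
  simp only [shiftMatrix, conjTranspose_sum, conjTranspose_single, star_one]
  exact Fintype.sum_equiv (Equiv.addRight k) _ _ fun i => by simp

variable [Fintype ι]

section Semiring

variable [Semiring R]

theorem shiftMatrix_mul_single (c : G ≃ ι) (k j : G) (b : ι) (v : R) :
    shiftMatrix R c k * single (c j) b v = single (c (j - k)) b v := by
  rw [shiftMatrix, Finset.sum_mul, Finset.sum_eq_single (j - k), sub_add_cancel,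
    single_mul_single_same, one_mul]
  · intro i _ hi
    exact single_mul_single_of_ne _ _ _ _ (fun h => hi (eq_sub_of_add_eq (c.injective h))) _
  · simp

theorem single_mul_shiftMatrix (c : G ≃ ι) (k m : G) (a : ι) (v : R) :
    single a (c m) v * shiftMatrix R c k = single a (c (m + k)) v := by
  rw [shiftMatrix, Finset.mul_sum, Finset.sum_eq_single m, single_mul_single_same, mul_one]
  · intro i _ hi
    exact single_mul_single_of_ne _ _ _ _ (fun h => hi (c.injective h).symm) _
  · simp

theorem shiftMatrix_mul_shiftMatrix (c : G ≃ ι) (k k' : G) :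
    shiftMatrix R c k * shiftMatrix R c k' = shiftMatrix R c (k + k') := by
  rw [shiftMatrix, Finset.sum_mul]
  simp only [single_mul_shiftMatrix, add_assoc]
  rfl

theorem shiftMatrix_zero (c : G ≃ ι) : shiftMatrix R c 0 = 1 := by
  simp only [shiftMatrix, add_zero]
  exact (c.sum_comp fun i => single i i (1 : R)).trans sum_single_one

theorem shiftMatrix_pow (c : G ≃ ι) (k : G) (n : ℕ) :
    shiftMatrix R c k ^ n = shiftMatrix R c (n • k) := by
  induction n with
  | zero => rw [pow_zero, zero_smul, shiftMatrix_zero]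
  | succ n ih => rw [pow_succ, ih, shiftMatrix_mul_shiftMatrix, succ_nsmul]

end Semiring

theorem shiftMatrix_conj_single [Semiring R] [StarRing R] (c : G ≃ ι) (k j m : G) (v : R) :
    shiftMatrix R c k * single (c j) (c m) v * (shiftMatrix R c k)ᴴ =
      single (c (j - k)) (c (m - k)) v := by
  rw [shiftMatrix_mul_single, shiftMatrix_conjTranspose, single_mul_shiftMatrix, ← sub_eq_add_neg]

end Matrix

theorem passageMatrix_eq_shiftMatrix (p : ℕ) [NeZero p] (c : ZMod p ≃ ZMod p) :
    passageMatrix p c = shiftMatrix ℂ c 1 :=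
  rfl

theorem passageMatrix_pow_val (p : ℕ) [NeZero p] (c : ZMod p ≃ ZMod p) (k : ZMod p) :
    passageMatrix p c ^ k.val = shiftMatrix ℂ c k := by
  rw [passageMatrix_eq_shiftMatrix, shiftMatrix_pow, nsmul_one, ZMod.natCast_zmod_val]

/-- The paper's `Φ_c`. -/
def circulantMap (p : ℕ) [NeZero p] (c : ZMod p ≃ ZMod p) (β : ZMod p → ℝ) :
    Matrix (ZMod p) (ZMod p) ℂ →ₗ[ℂ] Matrix (ZMod p) (ZMod p) ℂ :=
  ∑ k : ZMod p, (β (-k) : ℂ) •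
    (LinearMap.mulLeft ℂ (passageMatrix p c ^ k.val) ∘ₗ
      LinearMap.mulRight ℂ (passageMatrix p c ^ k.val)ᴴ)

theorem circulantMap_apply (p : ℕ) [NeZero p] (c : ZMod p ≃ ZMod p) (β : ZMod p → ℝ)
    (x : Matrix (ZMod p) (ZMod p) ℂ) :
    circulantMap p c β x = ∑ k : ZMod p, (β (-k) : ℂ) •
      (passageMatrix p c ^ k.val * x * (passageMatrix p c ^ k.val)ᴴ) := by
  simp [circulantMap, Matrix.mul_assoc]

theorem circulantMap_single (p : ℕ) [NeZero p] (c : ZMod p ≃ ZMod p) (β : ZMod p → ℝ)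
    (j l : ZMod p) :
    circulantMap p c β (single (c j) (c (j + l)) 1) =
      ∑ k : ZMod p, (β k : ℂ) • single (c (j + k)) (c (j + k + l)) 1 := by
  simp only [circulantMap_apply, passageMatrix_pow_val, shiftMatrix_conj_single]
  refine Fintype.sum_equiv (Equiv.neg _) _ _ fun k => ?_
  rw [Equiv.neg_apply, sub_eq_add_neg, sub_eq_add_neg, add_right_comm j l]

theorem stmt7_general (p : ℕ) [NeZero p] (c : ZMod p ≃ ZMod p)
    (Φ : Matrix (ZMod p) (ZMod p) ℂ →ₗ[ℂ] Matrix (ZMod p) (ZMod p) ℂ)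
    (β : ZMod p → ℝ)
    (hΦ : ∀ j l : ZMod p,
      Φ (Matrix.single (c j) (c (j + l)) (1 : ℂ)) =
        ∑ k : ZMod p, (β k : ℂ) •
          Matrix.single (c (j + k)) (c (j + k + l)) (1 : ℂ)) :
    ∀ x : Matrix (ZMod p) (ZMod p) ℂ,
      Φ x = ∑ k : ZMod p, (β (-k) : ℂ) •
        (passageMatrix p c ^ k.val * x * (passageMatrix p c ^ k.val)ᴴ) := by
  have hΦ_eq : Φ = circulantMap p c β :=
    linearMap_ext_single_equiv c fun j l => by rw [hΦ, circulantMap_single]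
  intro x
  rw [hΦ_eq, circulantMap_apply]

theorem stmt7 (p : ℕ) [NeZero p] (c : ZMod p ≃ ZMod p)
    (Φ : Matrix (ZMod p) (ZMod p) ℂ →ₗ[ℂ] Matrix (ZMod p) (ZMod p) ℂ)
    (β : ZMod p → ℝ) (hβ : ∀ k, 0 ≤ β k)
    (hΦ : ∀ j l : ZMod p,
      Φ (Matrix.single (c j) (c (j + l)) (1 : ℂ)) =
        ∑ k : ZMod p, (β k : ℂ) •
          Matrix.single (c (j + k)) (c (j + k + l)) (1 : ℂ)) :
    ∀ x : Matrix (ZMod p) (ZMod p) ℂ,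
      Φ x = ∑ k : ZMod p, (β (-k) : ℂ) •
        (passageMatrix p c ^ k.val * x * (passageMatrix p c ^ k.val)ᴴ) :=
  stmt7_general p c Φ β hΦ
end
end

section
/- Let p, q be positive integers, α : (ZMod p) × (ZMod q) → ℝ with α(i,j) ≥ 0 for all (i,j), and let Φ_* be the completely positive map on the complex matrices indexed by (ZMod p) × (ZMod q) given by Φ_*(x) = Σ_{(i,j)} α(-i,-j) (J_p^i ⊗ J_q^j) x (J_p^i ⊗ J_q^j)*. For (k,l) ∈ (ZMod p) × (ZMod q) let B_{kl} = span{E_{(i,j),(i+k,j+l)} : (i,j) ∈ (ZMod p) × (ZMod q)}. Then: (i) the subspaces B_{kl} are mutually orthogonal with respect to the Hilbert–Schmidt inner product ⟨A,B⟩ = tr(A*B) for distinct pairs (k,l); (ii) each B_{kl} is invariant under Φ_*, i.e. Φ_*(B_{kl}) ⊆ B_{kl}; and (iii) the B_{kl} together span the whole matrix space, i.e. ⨁_{(k,l)} B_{kl} is the space of all complex matrices indexed by (ZMod p) × (ZMod q). -/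
open Matrix Kronecker
noncomputable section
lemma Jpow (p : ℕ) [NeZero p] (n : ℕ) :
    Jmat p ^ n = Matrix.of fun i j => if j = i + (n : ZMod p) then 1 else 0 := by
  induction n with
  | zero => ext i j; simp [Matrix.one_apply, eq_comm]
  | succ n ih =>
    rw [pow_succ, ih]
    ext i j
    simp only [Matrix.mul_apply, Jmat, Matrix.of_apply, ite_mul, one_mul, zero_mul,
      Finset.sum_ite_eq', Finset.mem_univ, if_true, Nat.cast_add, Nat.cast_one, ← add_assoc]

/-- The Kraus operator `J_p^i ⊗ J_q^j`. -/
def Kr (p q : ℕ) [NeZero p] [NeZero q] (i : ZMod p) (j : ZMod q) :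
    Matrix (ZMod p × ZMod q) (ZMod p × ZMod q) ℂ :=
  (Jmat p ^ i.val) ⊗ₖ (Jmat q ^ j.val)

lemma Kr_apply (p q : ℕ) [NeZero p] [NeZero q] (i : ZMod p) (j : ZMod q)
    (w s : ZMod p × ZMod q) :
    Kr p q i j w s = if s = (w.1 + i, w.2 + j) then 1 else 0 := by
  obtain ⟨a, b⟩ := w; obtain ⟨c, d⟩ := s
  simp only [Kr, Matrix.kroneckerMap_apply, Jpow, Matrix.of_apply, ZMod.natCast_val,
    ZMod.cast_id, Prod.mk.injEq]
  by_cases h1 : c = a + i <;> by_cases h2 : d = b + j <;> simp [h1, h2]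

lemma Kr_mul_apply (p q : ℕ) [NeZero p] [NeZero q] (i : ZMod p) (j : ZMod q)
    (x : Matrix (ZMod p × ZMod q) (ZMod p × ZMod q) ℂ) (w z : ZMod p × ZMod q) :
    (Kr p q i j * x) w z = x (w.1 + i, w.2 + j) z := by
  simp [Matrix.mul_apply, Kr_apply, ite_mul]

lemma mul_KrH_apply (p q : ℕ) [NeZero p] [NeZero q] (i : ZMod p) (j : ZMod q)
    (x : Matrix (ZMod p × ZMod q) (ZMod p × ZMod q) ℂ) (w z : ZMod p × ZMod q) :
    (x * (Kr p q i j)ᴴ) w z = x w (z.1 + i, z.2 + j) := by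
  simp [Matrix.mul_apply, Matrix.conjTranspose_apply, Kr_apply, apply_ite, mul_ite]

lemma Kr_conj (p q : ℕ) [NeZero p] [NeZero q] (i : ZMod p) (j : ZMod q)
    (u v : ZMod p × ZMod q) :
    Kr p q i j * Matrix.single u v (1 : ℂ) * (Kr p q i j)ᴴ =
      Matrix.single (u.1 - i, u.2 - j) (v.1 - i, v.2 - j) (1 : ℂ) := by
  ext w z
  rw [mul_KrH_apply, Kr_mul_apply]
  simp only [Matrix.single, Matrix.of_apply, Prod.mk.injEq, Prod.ext_iff]
  simp [sub_eq_iff_eq_add]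

lemma trace_gen (p q : ℕ) [NeZero p] [NeZero q] (u v u' v' : ZMod p × ZMod q)
    (h : ¬(u = u' ∧ v = v')) :
    Matrix.trace ((Matrix.single u v (1 : ℂ))ᴴ *
      Matrix.single u' v' (1 : ℂ)) = 0 := by
  simp only [Matrix.trace, Matrix.diag, Matrix.mul_apply, Matrix.conjTranspose_apply,
    Matrix.single, Matrix.of_apply, ite_and, apply_ite, star_one, star_zero,
    ite_mul, one_mul, zero_mul, mul_ite, mul_one, mul_zero]
  rw [Finset.sum_comm]
  by_cases hu : u = u'
  · subst hu
    have hv : v ≠ v' := fun hv => h ⟨rfl, hv⟩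
    simp [Finset.sum_ite_eq, hv, Ne.symm hv]
  · simp [Finset.sum_ite_eq, hu, Ne.symm hu]

/-- The circulant completely positive map `Φ_*` associated with `α`. -/
def PhiStar (p q : ℕ) [NeZero p] [NeZero q] (α : ZMod p × ZMod q → ℝ)
    (x : Matrix (ZMod p × ZMod q) (ZMod p × ZMod q) ℂ) :
    Matrix (ZMod p × ZMod q) (ZMod p × ZMod q) ℂ :=
  ∑ ij : ZMod p × ZMod q,
    (α (-ij.1, -ij.2) : ℂ) • (Kr p q ij.1 ij.2 * x * (Kr p q ij.1 ij.2)ᴴ)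

/-- The subspace `B_{kl}` spanned by the matrix units `E_{(i,j),(i+k,j+l)}`. -/
def Bsub (p q : ℕ) (k : ZMod p) (l : ZMod q) :
    Submodule ℂ (Matrix (ZMod p × ZMod q) (ZMod p × ZMod q) ℂ) :=
  Submodule.span ℂ
    (Set.range fun ij : ZMod p × ZMod q =>
      Matrix.single ij (ij.1 + k, ij.2 + l) (1 : ℂ))

lemma PhiStar_add (p q : ℕ) [NeZero p] [NeZero q] (α : ZMod p × ZMod q → ℝ)
    (x y : Matrix (ZMod p × ZMod q) (ZMod p × ZMod q) ℂ) :
    PhiStar p q α (x + y) = PhiStar p q α x + PhiStar p q α y := by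
  simp [PhiStar, mul_add, add_mul, smul_add, Finset.sum_add_distrib]

lemma PhiStar_smul (p q : ℕ) [NeZero p] [NeZero q] (α : ZMod p × ZMod q → ℝ)
    (c : ℂ) (x : Matrix (ZMod p × ZMod q) (ZMod p × ZMod q) ℂ) :
    PhiStar p q α (c • x) = c • PhiStar p q α x := by
  simp only [PhiStar, Matrix.mul_smul, Matrix.smul_mul, Finset.smul_sum, smul_comm c]

theorem stmt8 (p q : ℕ) [NeZero p] [NeZero q]
    (α : ZMod p × ZMod q → ℝ) (hα : ∀ ij, 0 ≤ α ij) :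
    (∀ kl kl' : ZMod p × ZMod q, kl ≠ kl' →
      ∀ x ∈ Bsub p q kl.1 kl.2, ∀ y ∈ Bsub p q kl'.1 kl'.2,
        Matrix.trace (xᴴ * y) = 0) ∧
    (∀ kl : ZMod p × ZMod q, ∀ x ∈ Bsub p q kl.1 kl.2,
      PhiStar p q α x ∈ Bsub p q kl.1 kl.2) ∧
    (⨆ kl : ZMod p × ZMod q, Bsub p q kl.1 kl.2) = ⊤ := by
  refine ⟨?_, ?_, ?_⟩
  · rintro ⟨k, l⟩ ⟨k', l'⟩ hne x hx y hy
    induction hx using Submodule.span_induction with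
    | mem x hxm =>
      induction hy using Submodule.span_induction with
      | mem y hym =>
        obtain ⟨u, rfl⟩ := hxm
        obtain ⟨u', rfl⟩ := hym
        refine trace_gen p q _ _ _ _ ?_
        rintro ⟨rfl, h2⟩
        apply hne
        simp only [Prod.mk.injEq, Prod.ext_iff] at h2 ⊢
        exact ⟨by linear_combination h2.1, by linear_combination h2.2⟩
      | zero => simp
      | add y z _ _ hy hz => rw [mul_add, Matrix.trace_add, hy, hz, add_zero]
      | smul c y _ hy => rw [Matrix.mul_smul, Matrix.trace_smul, hy, smul_zero]
    | zero => simp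
    | add x z _ _ h1 h2 => rw [Matrix.conjTranspose_add, add_mul, Matrix.trace_add, h1, h2, add_zero]
    | smul c x _ h1 =>
      rw [Matrix.conjTranspose_smul, Matrix.smul_mul, Matrix.trace_smul, h1, smul_zero]
  · rintro ⟨k, l⟩ x hx
    induction hx using Submodule.span_induction with
    | mem x hxm =>
      obtain ⟨u, rfl⟩ := hxm
      unfold PhiStar
      refine Submodule.sum_mem _ fun ij _ => Submodule.smul_mem _ _ ?_
      rw [Kr_conj]
      have : ((u.1 + k - ij.1, u.2 + l - ij.2) : ZMod p × ZMod q)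
          = ((u.1 - ij.1) + k, (u.2 - ij.2) + l) := by
        simp only [Prod.mk.injEq]; constructor <;> ring
      rw [this]
      exact Submodule.subset_span ⟨(u.1 - ij.1, u.2 - ij.2), rfl⟩
    | zero =>
      have : PhiStar p q α 0 = 0 := by simp [PhiStar]
      rw [this]; exact Submodule.zero_mem _
    | add x y _ _ h1 h2 => rw [PhiStar_add]; exact Submodule.add_mem _ h1 h2
    | smul c x _ h1 => rw [PhiStar_smul]; exact Submodule.smul_mem _ _ h1
  · rw [eq_top_iff]
    intro x _
    rw [Matrix.matrix_eq_sum_single x]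
    refine Submodule.sum_mem _ fun u _ => Submodule.sum_mem _ fun v _ => ?_
    have hx : Matrix.single u v (x u v) = (x u v) • Matrix.single u v (1 : ℂ) := by
      rw [Matrix.smul_single, smul_eq_mul, mul_one]
    rw [hx]
    refine Submodule.smul_mem _ _ ?_
    refine Submodule.mem_iSup_of_mem (v.1 - u.1, v.2 - u.2) ?_
    refine Submodule.subset_span ⟨u, ?_⟩
    have hv : ((u.1 + (v.1 - u.1), u.2 + (v.2 - u.2)) : ZMod p × ZMod q) = v := by
      simp only [Prod.ext_iff]; constructor <;> ring
    exact congrArg (fun w => Matrix.single u w (1 : ℂ)) hv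
end
end

section
/- Let p, q be positive integers, α : (ZMod p) × (ZMod q) → ℝ with α(i,j) ≥ 0, and let Φ_*(x) = Σ_{(i,j)} α(-i,-j) (J_p^i ⊗ J_q^j) x (J_p^i ⊗ J_q^j)*. Then for all i₀, k ∈ ZMod p and j₀, l ∈ ZMod q, Φ_*(E_{(i₀,j₀),(i₀+k,j₀+l)}) = Σ_{(i,j) ∈ (ZMod p) × (ZMod q)} α(i - i₀, j - j₀) E_{(i,j),(i+k,j+l)}; that is, under the isomorphism E_{(i,j),(i+k,j+l)} ↦ e_i ⊗ e_j, the restriction of Φ_* to each invariant subspace B_{kl} acts as the block circulant matrix Q = Σ_{(i,j)} α(i,j)(J_p^i ⊗ J_q^j). -/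
/-!
`J_p^n` is the permutation matrix of the translation `i ↦ i + n` of `ZMod p`, so each Kraus
operator `J_p^a ⊗ J_q^b` is the permutation matrix of the translation by `(a, b)`, and
conjugating by it translates the row and column indices of a matrix. Hence `Φ_*` maps the matrix
unit at `(u, u + (k, l))` to `Σ_c α(-c) E_{u - c, u - c + (k, l)}`, and the substitution
`c ↦ u - c` gives the claim.
-/
open Matrix Kronecker

noncomputable section

theorem Matrix.kronecker_permMatrix {m n R : Type*} [DecidableEq m] [DecidableEq n]
    [MulZeroOneClass R] (σ : Equiv.Perm m) (τ : Equiv.Perm n) :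
    σ.permMatrix R ⊗ₖ τ.permMatrix R = Equiv.Perm.permMatrix R (σ.prodCongr τ) := by
  ext ⟨i, j⟩ ⟨i', j'⟩
  simp only [kroneckerMap_apply, PEquiv.toMatrix_apply, Equiv.toPEquiv_apply, Option.mem_def,
    Option.some.injEq, Equiv.prodCongr_apply, Prod.map, Prod.ext_iff]
  split_ifs <;> simp_all

theorem Matrix.permMatrix_mul_mul_conjTranspose {n R : Type*} [Fintype n] [DecidableEq n]
    [NonAssocSemiring R] [StarRing R] (σ : Equiv.Perm n) (M : Matrix n n R) :
    σ.permMatrix R * M * (σ.permMatrix R)ᴴ = M.submatrix σ σ := by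
  rw [conjTranspose_permMatrix, PEquiv.toMatrix_toPEquiv_mul, PEquiv.mul_toMatrix_toPEquiv]
  rfl

theorem Jmat_eq_permMatrix (p : ℕ) : Jmat p = (Equiv.addRight (1 : ZMod p)).permMatrix ℂ := by
  ext i j
  simp [Jmat, eq_comm]

theorem Jmat_pow_eq_permMatrix (p : ℕ) [NeZero p] (n : ℕ) :
    Jmat p ^ n = (Equiv.addRight (n : ZMod p)).permMatrix ℂ := by
  induction n with
  | zero => simp
  | succ n ih =>
    rw [pow_succ, ih, Jmat_eq_permMatrix, ← permMatrix_mul]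
    congr 1
    ext
    simp [add_assoc]

theorem Kr_eq_permMatrix (p q : ℕ) [NeZero p] [NeZero q] (a : ZMod p) (b : ZMod q) :
    Kr p q a b = (Equiv.addRight (a, b)).permMatrix ℂ := by
  rw [Kr, Jmat_pow_eq_permMatrix, Jmat_pow_eq_permMatrix, ZMod.natCast_zmod_val,
    ZMod.natCast_zmod_val, kronecker_permMatrix]
  rfl

theorem PhiStar_eq_sum_submatrix (p q : ℕ) [NeZero p] [NeZero q] (α : ZMod p × ZMod q → ℝ)
    (x : Matrix (ZMod p × ZMod q) (ZMod p × ZMod q) ℂ) :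
    PhiStar p q α x =
      ∑ c, (α (-c) : ℂ) • x.submatrix (Equiv.addRight c) (Equiv.addRight c) := by
  simp only [PhiStar, Kr_eq_permMatrix, permMatrix_mul_mul_conjTranspose]
  rfl

theorem stmt9_general (p q : ℕ) [NeZero p] [NeZero q]
    (α : ZMod p × ZMod q → ℝ)
    (i₀ k : ZMod p) (j₀ l : ZMod q) :
    PhiStar p q α (Matrix.single (i₀, j₀) (i₀ + k, j₀ + l) (1 : ℂ)) =
      ∑ ij : ZMod p × ZMod q,
        (α (ij.1 - i₀, ij.2 - j₀) : ℂ) •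
          Matrix.single ij (ij.1 + k, ij.2 + l) (1 : ℂ) := by
  rw [PhiStar_eq_sum_submatrix]
  refine Fintype.sum_equiv (Equiv.subLeft (i₀, j₀)) _ _ fun ⟨a, b⟩ => ?_
  rw [submatrix_single_equiv]
  simp [sub_eq_add_neg, add_right_comm]

theorem stmt9 (p q : ℕ) [NeZero p] [NeZero q]
    (α : ZMod p × ZMod q → ℝ) (hα : ∀ ij, 0 ≤ α ij)
    (i₀ k : ZMod p) (j₀ l : ZMod q) :
    PhiStar p q α (Matrix.single (i₀, j₀) (i₀ + k, j₀ + l) (1 : ℂ)) =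
      ∑ ij : ZMod p × ZMod q,
        (α (ij.1 - i₀, ij.2 - j₀) : ℂ) •
          Matrix.single ij (ij.1 + k, ij.2 + l) (1 : ℂ) :=
  stmt9_general p q α i₀ k j₀ l
end
end

section
/- Let p, q be positive integers and α : (ZMod p) × (ZMod q) → ℝ a probability distribution with α(0,0) = 0. Let Q be the real matrix indexed by (ZMod p) × (ZMod q) given by Q = Σ_{(i,j)} α(i,j) (J_p^i ⊗ J_q^j) − I. Then for every (m,n) ≠ (0,0), the entry of the matrix exponential satisfies lim_{t → 0⁺} (exp(tQ))_{(0,0),(m,n)} / t = α(m,n); that is, the function t ↦ (exp(tQ))_{(0,0),(m,n)}/t tends to α(m,n) as t tends to 0 from the right. -/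
/-!
Since `exp (t • Q) = 1 + t • Q + O(t²)`, an off-diagonal entry of `exp (t • Q) / t` tends to
the corresponding entry of `Q`. The `(0,0)`-row of `J_p^i ⊗ J_q^j` is the indicator of `(i, j)`,
so the `((0,0), (m,n))`-entry of `Q` is `α (m, n)`.
-/

open Matrix Kronecker Filter Topology

noncomputable section

/-- The primary permutation (left-shift) matrix `J_p` over `ℝ`. -/
def JmatR (p : ℕ) : Matrix (ZMod p) (ZMod p) ℝ :=
  Matrix.of fun i j => if j = i + 1 then 1 else 0

/-- The real Kraus operator `J_p^i ⊗ J_q^j`. -/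
def KrR (p q : ℕ) [NeZero p] [NeZero q] (i : ZMod p) (j : ZMod q) :
    Matrix (ZMod p × ZMod q) (ZMod p × ZMod q) ℝ :=
  (JmatR p ^ i.val) ⊗ₖ (JmatR q ^ j.val)

section MatrixExp

variable {n : Type*} [Fintype n] [DecidableEq n]

attribute [local instance] Matrix.linftyOpNormedRing Matrix.linftyOpNormedAlgebra

theorem Matrix.hasDerivAt_exp_smul_apply_zero (A : Matrix n n ℝ) (i j : n) :
    HasDerivAt (fun t : ℝ => NormedSpace.exp (t • A) i j) (A i j) 0 := by
  have hexp : HasDerivAt (fun t : ℝ => NormedSpace.exp (t • A)) A 0 :=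
    (hasDerivAt_exp_smul_const (𝕂 := ℝ) A 0).congr_deriv (by simp)
  exact (entryLinearMap ℝ ℝ i j).toContinuousLinearMap.hasFDerivAt.comp_hasDerivAt 0 hexp

theorem Matrix.tendsto_exp_smul_apply_div_nhdsNE (A : Matrix n n ℝ) {i j : n} (hij : i ≠ j) :
    Tendsto (fun t : ℝ => NormedSpace.exp (t • A) i j / t) (𝓝[≠] 0) (𝓝 (A i j)) := by
  refine (hasDerivAt_iff_tendsto_slope.mp (hasDerivAt_exp_smul_apply_zero A i j)).congr
    fun t => ?_
  simp [slope_def_field, one_apply_ne hij]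

end MatrixExp

theorem JmatR_pow_apply (p : ℕ) [NeZero p] (k : ℕ) (i j : ZMod p) :
    (JmatR p ^ k) i j = if j = i + k then 1 else 0 := by
  induction k generalizing j with
  | zero => simp [Matrix.one_apply, eq_comm]
  | succ k ih =>
    rw [pow_succ, mul_apply]
    simp only [ih]
    simp only [JmatR, of_apply, ite_mul, one_mul, zero_mul, Finset.sum_ite_eq',
      Finset.mem_univ, if_true]
    push_cast
    rw [add_assoc]

theorem KrR_apply_zero (p q : ℕ) [NeZero p] [NeZero q] (i : ZMod p) (j : ZMod q)
    (mn : ZMod p × ZMod q) : KrR p q i j (0, 0) mn = if mn = (i, j) then 1 else 0 := by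
  simp only [KrR, kroneckerMap_apply, JmatR_pow_apply, zero_add, ZMod.natCast_zmod_val,
    ite_zero_mul_ite_zero, mul_one, Prod.ext_iff]

theorem sum_smul_KrR_sub_one_apply_zero (p q : ℕ) [NeZero p] [NeZero q]
    (α : ZMod p × ZMod q → ℝ) {mn : ZMod p × ZMod q} (hmn : mn ≠ (0, 0)) :
    ((∑ ij : ZMod p × ZMod q, α ij • KrR p q ij.1 ij.2) - 1) (0, 0) mn = α mn := by
  simp [Matrix.sum_apply, KrR_apply_zero, one_apply_ne hmn.symm]

theorem stmt14_general (p q : ℕ) [NeZero p] [NeZero q]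
    (α : ZMod p × ZMod q → ℝ)
    (Q : Matrix (ZMod p × ZMod q) (ZMod p × ZMod q) ℝ)
    (hQ : Q = (∑ ij : ZMod p × ZMod q, α ij • KrR p q ij.1 ij.2) - 1) :
    ∀ mn : ZMod p × ZMod q, mn ≠ (0, 0) →
      Filter.Tendsto (fun t : ℝ => NormedSpace.exp (t • Q) (0, 0) mn / t)
        (nhdsWithin 0 (Set.Ioi 0)) (nhds (α mn)) := by
  intro mn hmn
  have hQ_apply : Q (0, 0) mn = α mn := hQ ▸ sum_smul_KrR_sub_one_apply_zero p q α hmn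
  rw [← hQ_apply]
  exact (Q.tendsto_exp_smul_apply_div_nhdsNE hmn.symm).mono_left (nhdsGT_le_nhdsNE 0)

theorem stmt14 (p q : ℕ) [NeZero p] [NeZero q]
    (α : ZMod p × ZMod q → ℝ) (hα : ∀ ij, 0 ≤ α ij)
    (hsum : ∑ ij : ZMod p × ZMod q, α ij = 1) (h0 : α (0, 0) = 0)
    (Q : Matrix (ZMod p × ZMod q) (ZMod p × ZMod q) ℝ)
    (hQ : Q = (∑ ij : ZMod p × ZMod q, α ij • KrR p q ij.1 ij.2) - 1) :
    ∀ mn : ZMod p × ZMod q, mn ≠ (0, 0) →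
      Filter.Tendsto (fun t : ℝ => NormedSpace.exp (t • Q) (0, 0) mn / t)
        (nhdsWithin 0 (Set.Ioi 0)) (nhds (α mn)) :=
  stmt14_general p q α Q hQ
end
end

section
/- Let p, q be positive integers and α : (ZMod p) × (ZMod q) → ℝ with α(0,0) = 0 and α(m,n) > 0 for all (m,n) ≠ (0,0). Consider the continuous-time Markov chain on the state space (ZMod p) × (ZMod q) with transition intensities q_{x,y} = α(y − x) for x ≠ y and uniform stationary measure π_x = 1/(pq). Then its classical entropy production rate equals the quantum one: (1/2) Σ_{x ≠ y} (π_x q_{x,y} − π_y q_{y,x}) · log( (π_x q_{x,y}) / (π_y q_{y,x}) ) = (1/2) Σ_{(m,n) ≠ (0,0)} (α(m,n) − α(-m,-n)) · log( α(m,n) / α(-m,-n) ), where both sums run over (ZMod p) × (ZMod q) and subtraction of states is componentwise in ZMod p and ZMod q. -/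
/-! Substituting `z = y - x` makes every inner sum the same sum over `z ≠ 0`, since `x - y = -z`;
the uniform factor `1/(pq)` cancels inside the logarithm and against the `pq` choices of `x`. -/

open Finset

theorem Finset.sum_erase_comp_sub_right {G M : Type*} [AddGroup G] [Fintype G] [DecidableEq G]
    [AddCommMonoid M] (f : G → M) (x : G) :
    ∑ y ∈ univ.erase x, f (y - x) = ∑ z ∈ univ.erase 0, f z :=
  sum_equiv (Equiv.subRight x) (by simp [sub_eq_zero]) (fun _ _ => rfl)

theorem Finset.sum_sum_erase_comp_sub {G M : Type*} [AddGroup G] [Fintype G] [DecidableEq G]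
    [AddCommMonoid M] (f : G → M) :
    ∑ x, ∑ y ∈ univ.erase x, f (y - x) = Fintype.card G • ∑ z ∈ univ.erase 0, f z := by
  simp only [sum_erase_comp_sub_right, sum_const, card_univ]

theorem Real.mul_sub_mul_mul_log_mul_div_mul {c : ℝ} (hc : c ≠ 0) (a b : ℝ) :
    (c * a - c * b) * Real.log (c * a / (c * b)) = c * ((a - b) * Real.log (a / b)) := by
  rw [mul_div_mul_left _ _ hc, ← mul_sub, mul_assoc]

theorem stmt16_general (p q : ℕ) [NeZero p] [NeZero q]
    (α : ZMod p × ZMod q → ℝ) :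
    (1 / 2) * ∑ x : ZMod p × ZMod q, ∑ y ∈ Finset.univ.erase x,
        ((1 / ((p : ℝ) * q)) * α (y - x) - (1 / ((p : ℝ) * q)) * α (x - y)) *
          Real.log (((1 / ((p : ℝ) * q)) * α (y - x)) /
            ((1 / ((p : ℝ) * q)) * α (x - y))) =
      (1 / 2) * ∑ mn ∈ Finset.univ.erase ((0 : ZMod p), (0 : ZMod q)),
        (α mn - α (-mn)) * Real.log (α mn / α (-mn)) := by
  have hpq : (p : ℝ) * q ≠ 0 := by simp [NeZero.ne]
  set c : ℝ := 1 / ((p : ℝ) * q) with hc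
  have hc0 : c ≠ 0 := one_div_ne_zero hpq
  set F : ZMod p × ZMod q → ℝ := fun z => (α z - α (-z)) * Real.log (α z / α (-z)) with hF
  calc _ = 1 / 2 * ∑ x : ZMod p × ZMod q, ∑ y ∈ univ.erase x, c * F (y - x) := by
        simp only [hF, neg_sub, Real.mul_sub_mul_mul_log_mul_div_mul hc0]
    _ = 1 / 2 * ∑ z ∈ univ.erase 0, F z := by
        rw [sum_sum_erase_comp_sub (fun z => c * F z), ← mul_sum, Fintype.card_prod, ZMod.card,
          ZMod.card, nsmul_eq_mul, Nat.cast_mul, hc,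
          ← mul_assoc ((p : ℝ) * q), mul_one_div_cancel hpq, one_mul]

/-- The classical entropy production rate of the circulant Markov chain on
`(ZMod p) × (ZMod q)` with intensities `q_{x,y} = α(y - x)` and uniform stationary
measure `π = 1/(pq)` equals the quantum entropy production rate. -/
theorem stmt16 (p q : ℕ) [NeZero p] [NeZero q]
    (α : ZMod p × ZMod q → ℝ) (h0 : α (0, 0) = 0)
    (hpos : ∀ mn : ZMod p × ZMod q, mn ≠ (0, 0) → 0 < α mn) :
    (1 / 2) * ∑ x : ZMod p × ZMod q, ∑ y ∈ Finset.univ.erase x,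
        ((1 / ((p : ℝ) * q)) * α (y - x) - (1 / ((p : ℝ) * q)) * α (x - y)) *
          Real.log (((1 / ((p : ℝ) * q)) * α (y - x)) /
            ((1 / ((p : ℝ) * q)) * α (x - y))) =
      (1 / 2) * ∑ mn ∈ Finset.univ.erase ((0 : ZMod p), (0 : ZMod q)),
        (α mn - α (-mn)) * Real.log (α mn / α (-mn)) :=
  stmt16_general p q α
end

section
/- Let p, q be positive integers and α : (ZMod p) × (ZMod q) → ℝ with α(0,0) = 0 and α(m,n) > 0 for all (m,n) ≠ (0,0). Then Σ_{(m,n) ≠ (0,0)} (α(m,n) − α(-m,-n)) · log( α(m,n) / α(-m,-n) ) = 0 if and only if α(m,n) = α(-m,-n) for all (m,n) ∈ (ZMod p) × (ZMod q). In other words, the Quantum Entropy Production Rate of the circulant quantum Markov semigroup vanishes exactly when the distribution α is symmetric under inversion. -/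
namespace Real

theorem sub_mul_log_div_nonneg {a b : ℝ} (ha : 0 < a) (hb : 0 < b) :
    0 ≤ (a - b) * log (a / b) := by
  rcases le_total a b with hab | hba
  · exact mul_nonneg_of_nonpos_of_nonpos (sub_nonpos.2 hab)
      (log_nonpos (div_nonneg ha.le hb.le) (div_le_one_of_le₀ hab hb.le))
  · exact mul_nonneg (sub_nonneg.2 hba) (log_nonneg ((one_le_div₀ hb).2 hba))

theorem sub_mul_log_div_eq_zero_iff {a b : ℝ} (ha : 0 < a) (hb : 0 < b) :
    (a - b) * log (a / b) = 0 ↔ a = b := by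
  refine ⟨fun h => ?_, fun hab => by rw [hab, sub_self, zero_mul]⟩
  rcases mul_eq_zero.1 h with hab | hlog
  · exact sub_eq_zero.1 hab
  · exact (div_eq_one_iff_eq hb.ne').1 (eq_one_of_pos_of_log_eq_zero (div_pos ha hb) hlog)

theorem sum_sub_mul_log_div_eq_zero_iff {ι : Type*} {s : Finset ι} {f g : ι → ℝ}
    (hf : ∀ i ∈ s, 0 < f i) (hg : ∀ i ∈ s, 0 < g i) :
    ∑ i ∈ s, (f i - g i) * log (f i / g i) = 0 ↔ ∀ i ∈ s, f i = g i := by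
  rw [Finset.sum_eq_zero_iff_of_nonneg fun i hi => sub_mul_log_div_nonneg (hf i hi) (hg i hi)]
  exact forall₂_congr fun i hi => sub_mul_log_div_eq_zero_iff (hf i hi) (hg i hi)

end Real

theorem stmt18_general (p q : ℕ) [NeZero p] [NeZero q]
    (α : ZMod p × ZMod q → ℝ)
    (hpos : ∀ mn : ZMod p × ZMod q, mn ≠ (0, 0) → 0 < α mn) :
    (∑ mn ∈ Finset.univ.erase ((0 : ZMod p), (0 : ZMod q)),
        (α mn - α (-mn)) * Real.log (α mn / α (-mn)) = 0) ↔
      ∀ mn : ZMod p × ZMod q, α mn = α (-mn) := by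
  simp only [Prod.mk_zero_zero] at hpos ⊢
  have hpos_erase : ∀ mn ∈ Finset.univ.erase 0, 0 < α mn :=
    fun mn hmn => hpos mn (Finset.ne_of_mem_erase hmn)
  have hpos_neg : ∀ mn ∈ Finset.univ.erase 0, 0 < α (-mn) :=
    fun mn hmn => hpos (-mn) (neg_ne_zero.2 (Finset.ne_of_mem_erase hmn))
  rw [Real.sum_sub_mul_log_div_eq_zero_iff hpos_erase hpos_neg]
  refine ⟨fun h mn => ?_, fun h mn _ => h mn⟩
  rcases eq_or_ne mn 0 with rfl | hmn
  · rw [neg_zero]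
  · exact h mn (Finset.mem_erase.2 ⟨hmn, Finset.mem_univ mn⟩)

/-- The Quantum Entropy Production Rate of a circulant quantum Markov semigroup
vanishes exactly when the distribution `α` is symmetric under inversion. -/
theorem stmt18 (p q : ℕ) [NeZero p] [NeZero q]
    (α : ZMod p × ZMod q → ℝ) (h0 : α (0, 0) = 0)
    (hpos : ∀ mn : ZMod p × ZMod q, mn ≠ (0, 0) → 0 < α mn) :
    (∑ mn ∈ Finset.univ.erase ((0 : ZMod p), (0 : ZMod q)),
        (α mn - α (-mn)) * Real.log (α mn / α (-mn)) = 0) ↔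
      ∀ mn : ZMod p × ZMod q, α mn = α (-mn) :=
  stmt18_general p q α hpos
end
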